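/- arXiv:2504.20549 — 6 statements merged into one kernel-verified Lean document; each statement's English description precedes it below -/
import Mathlib

section
/- For every ε ∈ ℂ, the set of tuples (A_b)_{b∈ℤ/nℤ} with every A_b ∈ gl_n(O) satisfying A_{b+1}·ψ_b(ε) = ψ_b(ε)·A_b for all b ∈ ℤ/nℤ equals the O-span a(ε) of the n² elements d_i (1 ≤ i ≤ n), u_{i,j}(ε) and l_{i,j}(ε) (1 ≤ i < j ≤ n); moreover these n² elements are linearly independent over O, so this set is a free O-module of rank n². -/
/-- The ring `O = ℂ[[z]]` of formal power series. -/
noncomputable abbrev O : Type := PowerSeries ℂ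

/-- The element `z + ε` of `O`. -/
noncomputable def zPlus (ε : ℂ) : O := PowerSeries.X + PowerSeries.C (R := ℂ) ε

/-- The diagonal matrix `ψ_b(ε)` over `O` whose `(b+1,b+1)` entry (1-based), i.e. `(b,b)`
entry (0-based), is `z+ε` and whose other diagonal entries are `1`. -/
noncomputable def psiO (n : ℕ) (ε : ℂ) (b : Fin n) : Matrix (Fin n) (Fin n) O :=
  Matrix.diagonal (fun i => if i = b then zPlus ε else 1)

/-- Index type for the `n²` generators: `n` diagonal ones, and an upper and a lower one
for each pair `i < j`. -/
abbrev GenIdx (n : ℕ) : Type :=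
  Fin n ⊕ ({p : Fin n × Fin n // p.1 < p.2} ⊕ {p : Fin n × Fin n // p.1 < p.2})

/-- The generators `d_i`, `u_{i,j}(ε)`, `l_{i,j}(ε)` of `a(ε)`.  Indices are 0-based:
the 1-based condition `i ≤ b ≤ j-1` for `1 ≤ i < j ≤ n`, `b ∈ {0,…,n-1}` reads
`i < b ∧ b ≤ j` in 0-based row/column indices `i < j`. -/
noncomputable def gen (n : ℕ) (ε : ℂ) : GenIdx n → (Fin n → Matrix (Fin n) (Fin n) O)
  | Sum.inl i => fun _ => Matrix.single i i 1
  | Sum.inr (Sum.inl ⟨(i, j), _⟩) => fun b =>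
      if i.val < b.val ∧ b.val ≤ j.val then Matrix.single i j (zPlus ε)
      else Matrix.single i j 1
  | Sum.inr (Sum.inr ⟨(i, j), _⟩) => fun b =>
      if i.val < b.val ∧ b.val ≤ j.val then Matrix.single j i 1
      else Matrix.single j i (zPlus ε)

/-!
Conjugation by the diagonal matrix `ψ_b` acts entrywise: `A` is a solution iff for every `(p, q)`
the sequence `a_b = A_b(p,q)` solves the cyclic recurrence `a_{b+1} · x_b = y_b · a_b` with
`x_b, y_b ∈ {1, z + ε}`. As `z + ε` is a nonzero element of the domain `O`, a solution of this
recurrence vanishing at one `b` vanishes everywhere. Exactly one generator is supported at `(p, q)`;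
its entry there, `profile ε p q b`, solves the recurrence and equals `1` at `b = p`. Hence
`A_b(p,q) = A_p(p,q) · profile ε p q b` for every solution, so the generators span, and reading
off the entries at `b = p` shows that they are independent.
-/

open Matrix

theorem Fin.val_add_one_eq_ite {n : ℕ} [NeZero n] (b : Fin n) :
    (b + 1).val = if b.val + 1 = n then 0 else b.val + 1 := by
  rcases Nat.lt_or_ge 1 n with hn | hn
  · rw [Fin.val_add, Fin.val_one', Nat.mod_eq_of_lt hn]
    split_ifs with h
    · rw [h, Nat.mod_self]
    · exact Nat.mod_eq_of_lt (by omega)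
  · obtain rfl : n = 1 := le_antisymm hn (Nat.pos_of_neZero n)
    simp

open Fin.NatCast in
theorem eq_mul_of_cyclic_recurrence {R : Type*} [CommRing R] [NoZeroDivisors R] {n : ℕ}
    [NeZero n] {x y a φ : Fin n → R} (hx : ∀ b, x b ≠ 0)
    (ha : ∀ b, a (b + 1) * x b = y b * a b) (hφ : ∀ b, φ (b + 1) * x b = y b * φ b)
    {b₀ : Fin n} (hφb₀ : φ b₀ = 1) (b : Fin n) : a b = a b₀ * φ b := by
  set d : Fin n → R := fun b => a b - a b₀ * φ b
  have hd : ∀ b, d (b + 1) * x b = y b * d b := fun b => by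
    simp only [d]
    linear_combination ha b - a b₀ * hφ b
  have hd_zero : ∀ k : ℕ, d (b₀ + (k : Fin n)) = 0 := by
    intro k
    induction k with
    | zero => simp [d, hφb₀]
    | succ k ih =>
      rw [Nat.cast_succ, ← add_assoc]
      have h := hd (b₀ + (k : Fin n))
      rw [ih, mul_zero] at h
      exact (mul_eq_zero.mp h).resolve_right (hx _)
  have h := hd_zero (b - b₀).val
  rw [Fin.cast_val_eq_self, add_sub_cancel] at h
  exact sub_eq_zero.mp h

theorem Matrix.single_mul_diagonal {l m α : Type*} [Fintype m] [DecidableEq l] [DecidableEq m]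
    [NonUnitalNonAssocSemiring α] (i : l) (j : m) (x : α) (w : m → α) :
    single i j x * diagonal w = single i j (x * w j) := by
  ext p q
  simp only [mul_diagonal, single_apply]
  split_ifs <;> simp_all

theorem Matrix.diagonal_mul_single {l m α : Type*} [Fintype l] [DecidableEq l] [DecidableEq m]
    [NonUnitalNonAssocSemiring α] (i : l) (j : m) (x : α) (w : l → α) :
    diagonal w * single i j x = single i j (w i * x) := by
  ext p q
  simp only [diagonal_mul, single_apply]
  split_ifs <;> simp_all

theorem zPlus_ne_zero (ε : ℂ) : zPlus ε ≠ 0 := by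
  intro h
  simpa [zPlus] using congrArg (PowerSeries.coeff 1) h

variable {n : ℕ} {ε : ℂ}

noncomputable def profile (ε : ℂ) (p q b : Fin n) : O :=
  if p < q then (if p < b ∧ b ≤ q then zPlus ε else 1)
  else if q < p then (if q < b ∧ b ≤ p then 1 else zPlus ε)
  else 1

theorem profile_self_left (ε : ℂ) (p q : Fin n) : profile ε p q p = 1 := by
  unfold profile
  split_ifs <;> first | rfl | omega

def genPos (n : ℕ) : GenIdx n ≃ Fin n × Fin n where
  toFun
    | Sum.inl i => (i, i)
    | Sum.inr (Sum.inl p) => p.1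
    | Sum.inr (Sum.inr p) => p.1.swap
  invFun p :=
    if h : p.1 < p.2 then Sum.inr (Sum.inl ⟨p, h⟩)
    else if h' : p.2 < p.1 then Sum.inr (Sum.inr ⟨p.swap, h'⟩)
    else Sum.inl p.1
  left_inv := by
    rintro (i | ⟨p, h⟩ | ⟨p, h⟩)
    · simp
    · simp [h]
    · simp [h, h.not_gt]
  right_inv := by
    rintro ⟨p, q⟩
    dsimp only
    split_ifs with h h'
    · rfl
    · rfl
    · simp [le_antisymm (not_lt.mp h') (not_lt.mp h)]

theorem gen_genPos_symm (ε : ℂ) (x : Fin n × Fin n) :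
    gen n ε ((genPos n).symm x) = fun b => single x.1 x.2 (profile ε x.1 x.2 b) := by
  obtain ⟨p, q⟩ := x
  funext b
  simp only [genPos, Equiv.coe_fn_symm_mk, profile]
  split_ifs with hpq hb hqp hb' <;> simp only [gen]
  · exact if_pos hb
  · exact if_neg hb
  · exact if_pos hb'
  · exact if_neg hb'
  · rw [le_antisymm (not_lt.mp hqp) (not_lt.mp hpq)]

theorem sum_smul_gen_apply (c : GenIdx n → O) (b p q : Fin n) :
    (∑ k, c k • gen n ε k) b p q = c ((genPos n).symm (p, q)) * profile ε p q b := by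
  rw [← (genPos n).symm.sum_comp]
  simp only [Finset.sum_apply, Pi.smul_apply, Matrix.sum_apply, Matrix.smul_apply,
    gen_genPos_symm]
  rw [Fintype.sum_eq_single (p, q) fun x hx => ?_]
  · rw [single_apply_same, smul_eq_mul]
  · rw [single_apply_of_ne _ _ _ _ _ (by rintro ⟨rfl, rfl⟩; exact hx rfl), smul_zero]

theorem linearIndependent_gen (ε : ℂ) : LinearIndependent O (gen n ε) := by
  refine Fintype.linearIndependent_iff.mpr fun c hc k => ?_
  obtain ⟨⟨p, q⟩, rfl⟩ := (genPos n).symm.surjective k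
  have h := sum_smul_gen_apply (ε := ε) c p p q
  rwa [hc, profile_self_left, mul_one, eq_comm] at h

variable [NeZero n]

theorem profile_add_one (ε : ℂ) (p q b : Fin n) :
    profile ε p q (b + 1) * (if q = b then zPlus ε else 1) =
      (if p = b then zPlus ε else 1) * profile ε p q b := by
  unfold profile
  simp only [Fin.lt_def, Fin.le_def, Fin.ext_iff, Fin.val_add_one_eq_ite]
  split_ifs <;> first | ring1 | omega

theorem gen_intertwines (ε : ℂ) (k : GenIdx n) (b : Fin n) :
    gen n ε k (b + 1) * psiO n ε b = psiO n ε b * gen n ε k b := by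
  obtain ⟨x, rfl⟩ := (genPos n).symm.surjective k
  rw [gen_genPos_symm, psiO, single_mul_diagonal, diagonal_mul_single, profile_add_one]

variable (n) in
noncomputable def intertwiners (ε : ℂ) : Submodule O (Fin n → Matrix (Fin n) (Fin n) O) where
  carrier := {A | ∀ b, A (b + 1) * psiO n ε b = psiO n ε b * A b}
  add_mem' hA hB b := by simp [add_mul, mul_add, hA b, hB b]
  zero_mem' b := by simp
  smul_mem' c A hA b := by simp [hA b]

theorem intertwiners_apply {A : Fin n → Matrix (Fin n) (Fin n) O} (hA : A ∈ intertwiners n ε)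
    (p q b : Fin n) :
    A (b + 1) p q * (if q = b then zPlus ε else 1) =
      (if p = b then zPlus ε else 1) * A b p q := by
  simpa [psiO] using congrFun (congrFun (hA b) p) q

theorem apply_eq_mul_profile {A : Fin n → Matrix (Fin n) (Fin n) O} (hA : A ∈ intertwiners n ε)
    (p q b : Fin n) : A b p q = A p p q * profile ε p q b :=
  eq_mul_of_cyclic_recurrence (a := fun b => A b p q)
    (fun b => by split_ifs; exacts [zPlus_ne_zero ε, one_ne_zero])
    (intertwiners_apply hA p q) (profile_add_one ε p q) (profile_self_left ε p q) b

theorem intertwiners_eq_span (ε : ℂ) :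
    intertwiners n ε = Submodule.span O (Set.range (gen n ε)) := by
  refine le_antisymm (fun A hA => ?_)
    (Submodule.span_le.mpr (Set.range_subset_iff.mpr fun k b => gen_intertwines ε k b))
  refine (Submodule.mem_span_range_iff_exists_fun O).mpr
    ⟨fun k => A (genPos n k).1 (genPos n k).1 (genPos n k).2, ?_⟩
  ext b p q
  rw [sum_smul_gen_apply, Equiv.apply_symm_apply, apply_eq_mul_profile hA p q b]

theorem statement1_general (n : ℕ) [NeZero n] (ε : ℂ) :
    ({A : Fin n → Matrix (Fin n) (Fin n) O |
        ∀ b : Fin n, A (b + 1) * psiO n ε b = psiO n ε b * A b}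
      = (Submodule.span O (Set.range (gen n ε)) : Set (Fin n → Matrix (Fin n) (Fin n) O))) ∧
    LinearIndependent O (gen n ε) :=
  ⟨congrArg SetLike.coe (intertwiners_eq_span ε), linearIndependent_gen ε⟩

/-- the tuples over `O` satisfying the intertwining relations form exactly
the `O`-span `a(ε)` of the `n²` generators, and these generators are linearly
independent over `O` (hence the set is a free `O`-module of rank `n²`). -/
theorem statement1 (n : ℕ) [NeZero n] (hn : 2 ≤ n) (ε : ℂ) :
    ({A : Fin n → Matrix (Fin n) (Fin n) O |
        ∀ b : Fin n, A (b + 1) * psiO n ε b = psiO n ε b * A b}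
      = (Submodule.span O (Set.range (gen n ε)) : Set (Fin n → Matrix (Fin n) (Fin n) O))) ∧
    LinearIndependent O (gen n ε) :=
  statement1_general n ε
end

section
/- For every ε ∈ ℂ and every 1 ≤ b ≤ n−1, the map sh_b sends strictly upper triangular n×n matrices over ℂ[z] to strictly upper triangular matrices and preserves the commutator bracket on them: for all strictly upper triangular X, Y over ℂ[z], sh_b(X·Y − Y·X) = sh_b(X)·sh_b(Y) − sh_b(Y)·sh_b(X). Thus sh_b is a Lie algebra endomorphism of the nilpotent Lie algebra n(ℂ[z]) of strictly upper triangular matrices over ℂ[z]. -/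
/-- The map `sh_b(ε)` on `n×n` matrices over `ℂ[z]`: it multiplies the `(i,j)` entry by
`z+ε` whenever (in 1-based indices) `i ≤ b < j`, i.e. in 0-based indices `i < b ∧ b ≤ j`,
and leaves the other entries unchanged.  For `b = 0` no entry satisfies the condition,
so `sh_0` is the identity. -/
noncomputable def sh (n : ℕ) (ε : ℂ) (b : Fin n)
    (X : Matrix (Fin n) (Fin n) (Polynomial ℂ)) : Matrix (Fin n) (Fin n) (Polynomial ℂ) :=
  fun i j => if i.val < b.val ∧ b.val ≤ j.val
    then (Polynomial.X + Polynomial.C ε) * X i j else X i j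

/-- A matrix is strictly upper triangular if all entries `(i,j)` with `i ≥ j` vanish. -/
def StrictUpper {n : ℕ} (X : Matrix (Fin n) (Fin n) (Polynomial ℂ)) : Prop :=
  ∀ i j : Fin n, j ≤ i → X i j = 0

/-- each `sh_b` sends strictly upper triangular matrices over `ℂ[z]` to
strictly upper triangular matrices and preserves the commutator bracket on them; thus
`sh_b` is a Lie algebra endomorphism of the nilpotent Lie algebra `n(ℂ[z])`. -/
theorem statement4 (n : ℕ) [NeZero n] (hn : 2 ≤ n) (ε : ℂ) (b : Fin n) :
    (∀ X : Matrix (Fin n) (Fin n) (Polynomial ℂ), StrictUpper X → StrictUpper (sh n ε b X)) ∧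
    (∀ X Y : Matrix (Fin n) (Fin n) (Polynomial ℂ), StrictUpper X → StrictUpper Y →
      sh n ε b (X * Y - Y * X) = sh n ε b X * sh n ε b Y - sh n ε b Y * sh n ε b X) := by
  have sh_mul : ∀ X Y : Matrix (Fin n) (Fin n) (Polynomial ℂ), StrictUpper X → StrictUpper Y →
      sh n ε b (X * Y) = sh n ε b X * sh n ε b Y := by
    intro X Y hX hY
    funext i j
    simp only [sh, Matrix.mul_apply]
    by_cases h : i.val < b.val ∧ b.val ≤ j.val
    · rw [if_pos h, Finset.mul_sum]
      apply Finset.sum_congr rfl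
      intro k _
      by_cases hk : b.val ≤ k.val
      · rw [if_pos ⟨h.1, hk⟩, if_neg (by omega)]; ring
      · rw [if_neg (by omega), if_pos ⟨by omega, h.2⟩]; ring
    · rw [if_neg h]
      apply Finset.sum_congr rfl
      intro k _
      by_cases hk1 : i.val < b.val ∧ b.val ≤ k.val
      · have hy : Y k j = 0 := hY k j (by rw [Fin.le_def]; omega)
        rw [if_pos hk1, hy]; split <;> ring
      · by_cases hk2 : k.val < b.val ∧ b.val ≤ j.val
        · have hx : X i k = 0 := hX i k (by rw [Fin.le_def]; omega)
          rw [if_neg hk1, hx]; split <;> ring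
        · rw [if_neg hk1, if_neg hk2]
  constructor
  · intro X hX i j hij
    simp only [sh]
    rw [hX i j hij]
    split <;> simp
  · intro X Y hX hY
    have hsub : sh n ε b (X * Y - Y * X) = sh n ε b (X * Y) - sh n ε b (Y * X) := by
      funext i j
      simp only [sh, Matrix.sub_apply]
      split <;> ring
    rw [hsub, sh_mul X Y hX hY, sh_mul Y X hY hX]
end

section
/- For every ε ∈ ℂ with ε ≠ 0, the projection onto the component b = 0 restricts to a Lie algebra isomorphism from C(ε) onto gl_n(ℂ). -/
/-- The diagonal matrix `D_b(ε)` over `ℂ` whose `(b+1,b+1)` entry (1-based), i.e. `(b,b)`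
entry (0-based), is `ε` and whose other diagonal entries are `1`. -/
def Dmat (n : ℕ) (ε : ℂ) (b : Fin n) : Matrix (Fin n) (Fin n) ℂ :=
  Matrix.diagonal (fun i => if i = b then ε else 1)

/-- `C(ε)`: tuples `(A_b)_{b ∈ ℤ/nℤ}` of complex `n×n` matrices with
`A_{b+1} D_b(ε) = D_b(ε) A_b` for all `b`. -/
def Cset (n : ℕ) [NeZero n] (ε : ℂ) : Set (Fin n → Matrix (Fin n) (Fin n) ℂ) :=
  {A | ∀ b : Fin n, A (b + 1) * Dmat n ε b = Dmat n ε b * A b}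

namespace S8aux

noncomputable def Dinv (n : ℕ) (ε : ℂ) (b : Fin n) : Matrix (Fin n) (Fin n) ℂ :=
  Matrix.diagonal (fun i => if i = b then ε⁻¹ else 1)

noncomputable def Q (n : ℕ) (ε : ℂ) (k : ℕ) : Matrix (Fin n) (Fin n) ℂ :=
  Matrix.diagonal (fun i => if (i : ℕ) < k then ε else 1)

noncomputable def Qi (n : ℕ) (ε : ℂ) (k : ℕ) : Matrix (Fin n) (Fin n) ℂ :=
  Matrix.diagonal (fun i => if (i : ℕ) < k then ε⁻¹ else 1)

variable {n : ℕ} {ε : ℂ}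

lemma D_mul_Dinv (hε : ε ≠ 0) (b : Fin n) : Dmat n ε b * Dinv n ε b = 1 := by
  simp only [Dmat, Dinv, Matrix.diagonal_mul_diagonal]
  have hf : (fun i : Fin n => (if i = b then ε else 1) * if i = b then ε⁻¹ else 1)
      = fun _ => (1 : ℂ) := by
    funext i
    by_cases h : i = b <;> simp [h, mul_inv_cancel₀ hε]
  rw [hf, Matrix.diagonal_one]

lemma Q_zero : Q n ε 0 = 1 := by simp [Q, Matrix.diagonal_one]
lemma Qi_zero : Qi n ε 0 = 1 := by simp [Qi, Matrix.diagonal_one]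

lemma D_mul_Q (b : Fin n) : Dmat n ε b * Q n ε b.val = Q n ε (b.val + 1) := by
  simp only [Dmat, Q, Matrix.diagonal_mul_diagonal]
  have hf : (fun i : Fin n => (if i = b then ε else 1) * if (i : ℕ) < b.val then ε else 1)
      = fun i : Fin n => if (i : ℕ) < b.val + 1 then ε else 1 := by
    funext i
    by_cases h : i = b
    · subst h; simp
    · have hv : (i : ℕ) ≠ (b : ℕ) := fun hh => h (Fin.ext hh)
      have h2 : (i : ℕ) < b.val + 1 ↔ (i : ℕ) < b.val := by omega
      simp [h, h2]
  rw [hf]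

lemma Qi_mul_D (hε : ε ≠ 0) (b : Fin n) :
    Qi n ε (b.val + 1) * Dmat n ε b = Qi n ε b.val := by
  simp only [Dmat, Qi, Matrix.diagonal_mul_diagonal]
  have hf : (fun i : Fin n => (if (i : ℕ) < b.val + 1 then ε⁻¹ else 1) * if i = b then ε else 1)
      = fun i : Fin n => if (i : ℕ) < b.val then ε⁻¹ else 1 := by
    funext i
    by_cases h : i = b
    · subst h; simp [inv_mul_cancel₀ hε]
    · have hv : (i : ℕ) ≠ (b : ℕ) := fun hh => h (Fin.ext hh)
      have h2 : (i : ℕ) < b.val + 1 ↔ (i : ℕ) < b.val := by omega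
      simp [h, h2]
  rw [hf]

lemma Q_top : Q n ε n = ε • (1 : Matrix (Fin n) (Fin n) ℂ) := by
  rw [Matrix.smul_one_eq_diagonal]
  simp only [Q]
  have hf : (fun i : Fin n => if (i : ℕ) < n then ε else 1) = fun _ => ε := by
    funext i; simp [i.isLt]
  rw [hf]

lemma Qi_top : Qi n ε n = ε⁻¹ • (1 : Matrix (Fin n) (Fin n) ℂ) := by
  rw [Matrix.smul_one_eq_diagonal]
  simp only [Qi]
  have hf : (fun i : Fin n => if (i : ℕ) < n then ε⁻¹ else 1) = fun _ => ε⁻¹ := by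
    funext i; simp [i.isLt]
  rw [hf]

lemma conj_top (hε : ε ≠ 0) (M : Matrix (Fin n) (Fin n) ℂ) :
    Q n ε n * M * Qi n ε n = M := by
  rw [Q_top, Qi_top, smul_mul_assoc, one_mul, mul_smul_comm, mul_one,
    smul_smul, inv_mul_cancel₀ hε, one_smul]

end S8aux

open S8aux in
/-- for `ε ≠ 0`, `C(ε)` is closed under the componentwise commutator
bracket and the projection onto the component `b = 0` (which automatically preserves
the bracket) restricts to a bijection from `C(ε)` onto all of `gl_n(ℂ)`, i.e. a Lie
algebra isomorphism `C(ε) ≅ gl_n(ℂ)`. -/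
theorem statement8 (n : ℕ) [NeZero n] (hn : 2 ≤ n) (ε : ℂ) (hε : ε ≠ 0) :
    (∀ A ∈ Cset n ε, ∀ B ∈ Cset n ε, (fun b => A b * B b - B b * A b) ∈ Cset n ε) ∧
    Set.BijOn (fun A : Fin n → Matrix (Fin n) (Fin n) ℂ => A 0) (Cset n ε)
      Set.univ := by
  have hone : (1 : Fin n).val = 1 := by
    rw [Fin.val_one']
    exact Nat.mod_eq_of_lt (by omega)
  have hadd : ∀ (k : ℕ) (hk : k < n) (hk1 : k + 1 < n),
      (⟨k, hk⟩ : Fin n) + 1 = ⟨k + 1, hk1⟩ := by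
    intro k hk hk1
    rw [Fin.add_def]
    apply Fin.ext
    simp [hone, Nat.mod_eq_of_lt hk1]
  constructor
  · -- bracket closure
    intro A hA B hB b
    have h1 := hA b
    have h2 := hB b
    calc (A (b+1) * B (b+1) - B (b+1) * A (b+1)) * Dmat n ε b
        = A (b+1) * (B (b+1) * Dmat n ε b) - B (b+1) * (A (b+1) * Dmat n ε b) := by
          noncomm_ring
      _ = A (b+1) * (Dmat n ε b * B b) - B (b+1) * (Dmat n ε b * A b) := by rw [h1, h2]
      _ = (A (b+1) * Dmat n ε b) * B b - (B (b+1) * Dmat n ε b) * A b := by noncomm_ring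
      _ = (Dmat n ε b * A b) * B b - (Dmat n ε b * B b) * A b := by rw [h1, h2]
      _ = Dmat n ε b * (A b * B b - B b * A b) := by noncomm_ring
  · refine ⟨fun _ _ => trivial, ?_, ?_⟩
    · -- injectivity
      intro A hA B hB h0
      have key : ∀ k (hk : k < n), A ⟨k, hk⟩ = B ⟨k, hk⟩ := by
        intro k
        induction k with
        | zero =>
          intro hk
          have : (⟨0, hk⟩ : Fin n) = 0 := rfl
          rw [this]; exact h0
        | succ k ih =>
          intro hk1
          have hk : k < n := by omega
          have h1 := hA ⟨k, hk⟩
          have h2 := hB ⟨k, hk⟩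
          rw [hadd k hk hk1] at h1 h2
          have step : ∀ (X Y : Matrix (Fin n) (Fin n) ℂ),
              X * Dmat n ε ⟨k, hk⟩ = Dmat n ε ⟨k, hk⟩ * Y →
              X = Dmat n ε ⟨k, hk⟩ * Y * Dinv n ε ⟨k, hk⟩ := by
            intro X Y h
            have := congrArg (· * Dinv n ε ⟨k, hk⟩) h
            simpa [mul_assoc, D_mul_Dinv hε] using this
          rw [step _ _ h1, step _ _ h2, ih hk]
      funext b
      have := key b.val b.isLt
      simpa using this
    · -- surjectivity
      intro M _
      refine ⟨fun b => Q n ε b.val * M * Qi n ε b.val, ?_, ?_⟩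
      · intro b
        have conj_succ :
            Q n ε (b.val + 1) * M * Qi n ε (b.val + 1) * Dmat n ε b
              = Dmat n ε b * (Q n ε b.val * M * Qi n ε b.val) := by
          rw [mul_assoc (Q n ε (b.val + 1) * M), Qi_mul_D hε, ← D_mul_Q]
          noncomm_ring
        show Q n ε (b + 1).val * M * Qi n ε (b + 1).val * Dmat n ε b
            = Dmat n ε b * (Q n ε b.val * M * Qi n ε b.val)
        by_cases hb : b.val + 1 < n
        · have hb1 : (b + 1).val = b.val + 1 := by
            simp [Fin.add_def, hone, Nat.mod_eq_of_lt hb]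
          rw [hb1]; exact conj_succ
        · have hbn : b.val + 1 = n := by have := b.isLt; omega
          have hb1 : (b + 1).val = 0 := by
            simp [Fin.add_def, hone, hbn]
          rw [hb1]
          have hA0 : Q n ε 0 * M * Qi n ε 0 = Q n ε (b.val + 1) * M * Qi n ε (b.val + 1) := by
            rw [hbn, conj_top hε, Q_zero, Qi_zero, one_mul, mul_one]
          rw [hA0]; exact conj_succ
      · show Q n ε (0 : Fin n).val * M * Qi n ε (0 : Fin n).val = M
        simp [Q_zero, Qi_zero]
end

section
/- Let L = { (A_b) ∈ C(0) : every component A_b is strictly lower triangular }. Then L is an abelian Lie ideal of C(0), i.e. [L, L] = 0 and [C(0), L] ⊆ L, of dimension n(n−1)/2; moreover L equals the kernel of the restriction to C(0) of the projection onto the component b = 0. -/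
/-!
Entrywise, `A_{b+1} D_b(0) = D_b(0) A_b` says that the off-diagonal entry `(i, j)` of `A_b` does
not change when `b` steps to `b + 1` unless `b ∈ {i, j}`, and that it vanishes at `b = j`.
Following `b` around the cycle, the entry `(i, j)` vanishes for `b` in the cyclic interval
`(i, j]` and is constant on `(j, i]`. For a strictly lower triangular tuple only the windows
`j < b ≤ i` survive, so `L` is parametrized by the entries `A_i(i, j)` with `j < i`. The windows
of `(i, j)` and of `(j, k)` never contain a common `b`, so products of elements of `L` vanish, and
`b = 0` lies in no window, so `A_0 = 0` cuts out `L` inside `C(0)`.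
-/

/-- The diagonal matrix `D_b(0)` over `ℂ` whose `(b+1,b+1)` entry (1-based), i.e. `(b,b)`
entry (0-based), is `0` and whose other diagonal entries are `1`. -/
def Dmat0 (n : ℕ) (b : Fin n) : Matrix (Fin n) (Fin n) ℂ :=
  Matrix.diagonal (fun i => if i = b then 0 else 1)

/-- `C(0)`: tuples `(A_b)_{b ∈ ℤ/nℤ}` of complex `n×n` matrices with
`A_{b+1} D_b(0) = D_b(0) A_b` for all `b`. -/
def Cset0 (n : ℕ) [NeZero n] : Set (Fin n → Matrix (Fin n) (Fin n) ℂ) :=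
  {A | ∀ b : Fin n, A (b + 1) * Dmat0 n b = Dmat0 n b * A b}

/-- `L`: tuples in `C(0)` all of whose components are strictly lower triangular
(entries `(i,j)` with `i ≤ j` vanish). -/
def Lset (n : ℕ) [NeZero n] : Set (Fin n → Matrix (Fin n) (Fin n) ℂ) :=
  {A | A ∈ Cset0 n ∧ ∀ (b : Fin n) (i j : Fin n), i ≤ j → A b i j = 0}

namespace Fin

variable {n : ℕ} [NeZero n] {α : Type*} {f : Fin n → α} {b c i j : Fin n}

theorem val_add_one_of_val_add_one_eq (h : b.val + 1 = n) : (b + 1).val = 0 := by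
  rw [val_add, val_one', Nat.add_mod_mod, h, Nat.mod_self]

theorem lt_add_one_and_add_one_le_iff (hjb : j ≠ b) :
    j < b + 1 ∧ b + 1 ≤ i ↔ j < b ∧ b < i := by
  have hjb' := val_ne_of_ne hjb
  rcases Nat.lt_or_eq_of_le b.isLt with hb | hb
  · simp only [lt_def, le_def, val_add_one_of_lt' hb]; omega
  · simp only [lt_def, le_def, val_add_one_of_val_add_one_eq hb]; omega

theorem apply_eq_of_forall_apply_add_one_eq (hbc : b ≤ c)
    (h : ∀ d, b ≤ d → d < c → f (d + 1) = f d) : f c = f b := by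
  obtain ⟨k, hk⟩ : ∃ k, c.val = b.val + k := ⟨c.val - b.val, by rw [le_def] at hbc; omega⟩
  induction k generalizing c with
  | zero => rw [Fin.ext (by omega : c.val = b.val)]
  | succ k ih =>
    let d : Fin n := ⟨b.val + k, by omega⟩
    have hdc : d < c := by rw [lt_def]; simp [d]; omega
    have hbd : b ≤ d := by rw [le_def]; simp [d]
    have hsucc : d + 1 = c := by
      ext
      rw [val_add_one_of_lt' (by simp [d]; omega)]
      simp [d]; omega
    rw [← hsucc, h d hbd hdc]
    exact ih hbd (fun e hbe hed => h e hbe (hed.trans hdc)) rfl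

theorem apply_zero_eq_of_forall_apply_add_one_eq (h : ∀ d, b ≤ d → f (d + 1) = f d) :
    f 0 = f b := by
  let last : Fin n := ⟨n - 1, Nat.sub_one_lt (NeZero.ne n)⟩
  have hb : b ≤ last := by rw [le_def]; simp [last]; omega
  have hlast : last + 1 = 0 :=
    Fin.ext (val_add_one_of_val_add_one_eq (Nat.sub_add_cancel NeZero.one_le))
  rw [← hlast, h last hb, apply_eq_of_forall_apply_add_one_eq hb fun d hbd _ => h d hbd]

end Fin

theorem Matrix.mul_apply_eq_zero_of_forall {ι R : Type*} [Fintype ι] [NonUnitalNonAssocSemiring R]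
    {M N : Matrix ι ι R} {i k : ι} (h : ∀ j, M i j = 0 ∨ N j k = 0) : (M * N) i k = 0 :=
  Finset.sum_eq_zero fun j _ => by rcases h j with h | h <;> simp [h]

theorem Fintype.card_subtype_snd_lt_fst {α : Type*} [Fintype α] [LinearOrder α] :
    Fintype.card {p : α × α // p.2 < p.1} = (Fintype.card α).choose 2 := by
  rw [Fintype.card_congr
      ((Equiv.prodComm α α).subtypeEquiv (p := fun p => p.2 < p.1) (q := fun p => p.1 < p.2)
        fun _ => Iff.rfl),
    Fintype.card_subtype, Fintype.card_product_filter_lt]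

def Cset0.subalgebra (n : ℕ) [NeZero n] :
    Subalgebra ℂ (Fin n → Matrix (Fin n) (Fin n) ℂ) where
  carrier := Cset0 n
  mul_mem' {A B} hA hB b := by
    simp only [Pi.mul_apply]
    rw [mul_assoc, hB b, ← mul_assoc, hA b, mul_assoc]
  add_mem' hA hB b := by simp only [Pi.add_apply, add_mul, mul_add, hA b, hB b]
  algebraMap_mem' c _ := Algebra.commutes c _

def Lset.submodule (n : ℕ) [NeZero n] : Submodule ℂ (Fin n → Matrix (Fin n) (Fin n) ℂ) where
  carrier := Lset n
  zero_mem' := ⟨(Cset0.subalgebra n).zero_mem, fun _ _ _ _ => rfl⟩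
  add_mem' hA hB := ⟨(Cset0.subalgebra n).add_mem hA.1 hB.1,
    fun b i j hij => by simp [hA.2 b i j hij, hB.2 b i j hij]⟩
  smul_mem' c _ hA := ⟨(Cset0.subalgebra n).smul_mem hA.1 c,
    fun b i j hij => by simp [hA.2 b i j hij]⟩

def lowerWindow {n : ℕ} (x : Fin n → Fin n → ℂ) : Fin n → Matrix (Fin n) (Fin n) ℂ :=
  fun b => Matrix.of fun i j => if j < b ∧ b ≤ i then x i j else 0

section
variable {n : ℕ} [NeZero n] {A B : Fin n → Matrix (Fin n) (Fin n) ℂ} {b c i j : Fin n}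

theorem mem_Cset0_iff : A ∈ Cset0 n ↔
    ∀ b i j, (if j = b then 0 else A (b + 1) i j) = if i = b then 0 else A b i j := by
  simp only [Cset0, Set.mem_ofPred_eq, Dmat0, ← Matrix.ext_iff, Matrix.mul_diagonal,
    Matrix.diagonal_mul, mul_ite, ite_mul, mul_zero, zero_mul, mul_one, one_mul]

namespace Cset0

theorem apply_add_one_eq (hA : A ∈ Cset0 n) (hi : i ≠ b) (hj : j ≠ b) :
    A (b + 1) i j = A b i j := by
  simpa [hi, hj] using mem_Cset0_iff.1 hA b i j

theorem apply_apply_eq_zero_of_ne (hA : A ∈ Cset0 n) (hij : i ≠ j) : A j i j = 0 := by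
  simpa [hij] using (mem_Cset0_iff.1 hA j i j).symm

theorem apply_eq_of_le (hA : A ∈ Cset0 n) (hbc : b ≤ c)
    (h : ∀ d, b ≤ d → d < c → d ≠ i ∧ d ≠ j) : A c i j = A b i j :=
  Fin.apply_eq_of_forall_apply_add_one_eq (f := fun b => A b i j) hbc fun d hbd hdc =>
    apply_add_one_eq hA (h d hbd hdc).1.symm (h d hbd hdc).2.symm

theorem apply_zero_eq (hA : A ∈ Cset0 n) (h : ∀ d, b ≤ d → d ≠ i ∧ d ≠ j) :
    A 0 i j = A b i j :=
  Fin.apply_zero_eq_of_forall_apply_add_one_eq (f := fun b => A b i j) fun d hbd =>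
    apply_add_one_eq hA (h d hbd).1.symm (h d hbd).2.symm

theorem apply_eq_zero_of_le (hA : A ∈ Cset0 n) (hbj : b ≤ j) (hi : ¬(b ≤ i ∧ i ≤ j)) :
    A b i j = 0 := by
  rw [← apply_eq_of_le hA hbj, apply_apply_eq_zero_of_ne hA]
  · rintro rfl; exact hi ⟨hbj, le_rfl⟩
  · rintro d hbd hdj
    refine ⟨?_, hdj.ne⟩
    rintro rfl; exact hi ⟨hbd, hdj.le⟩

theorem apply_eq_zero_of_lt_of_lt (hA : A ∈ Cset0 n) (hji : j < i) (hib : i < b) :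
    A b i j = 0 := by
  rw [← apply_zero_eq hA, apply_eq_zero_of_le hA (Fin.zero_le j) (by order)]
  exact fun d hbd => ⟨by order, by order⟩

end Cset0

namespace Lset

theorem apply_eq_zero (hA : A ∈ Lset n) (h : ¬(j < b ∧ b ≤ i)) : A b i j = 0 := by
  rcases le_or_gt i j with hij | hji
  · exact hA.2 b i j hij
  rcases le_or_gt b j with hbj | hjb
  · exact Cset0.apply_eq_zero_of_le hA.1 hbj (by order)
  · exact Cset0.apply_eq_zero_of_lt_of_lt hA.1 hji (lt_of_not_ge fun hbi => h ⟨hjb, hbi⟩)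

theorem mul_eq_zero (hA : A ∈ Lset n) (hB : B ∈ Lset n) : A * B = 0 := by
  funext b
  ext i k
  refine Matrix.mul_apply_eq_zero_of_forall fun j => ?_
  by_cases hj : j < b ∧ b ≤ i
  · exact .inr (apply_eq_zero hB fun h => by order [hj.1, h.2])
  · exact .inl (apply_eq_zero hA hj)

theorem mul_sub_mul_mem (hA : A ∈ Cset0 n) (hB : B ∈ Lset n) :
    A * B - B * A ∈ Lset n := by
  refine ⟨Subalgebra.sub_mem (Cset0.subalgebra n) (Subalgebra.mul_mem _ hA hB.1)
    (Subalgebra.mul_mem _ hB.1 hA), fun b i k hik => ?_⟩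
  have hAB : (A b * B b) i k = 0 := Matrix.mul_apply_eq_zero_of_forall fun j => by
    by_cases hj : k < b ∧ b ≤ j
    · exact .inl (Cset0.apply_eq_zero_of_le hA hj.2 fun h => by order [hj.1, h.1])
    · exact .inr (apply_eq_zero hB hj)
  have hBA : (B b * A b) i k = 0 := Matrix.mul_apply_eq_zero_of_forall fun j => by
    by_cases hj : j < b ∧ b ≤ i
    · exact .inr (Cset0.apply_eq_zero_of_le hA (hj.2.trans hik) fun h => by order [hj.1, h.1])
    · exact .inl (apply_eq_zero hB hj)
  simp [hAB, hBA]

end Lset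

theorem lowerWindow_mem_Lset (x : Fin n → Fin n → ℂ) : lowerWindow x ∈ Lset n := by
  refine ⟨mem_Cset0_iff.2 fun b i j => ?_, fun b i j hij => if_neg fun h => by order [h.1, h.2]⟩
  simp only [lowerWindow, Matrix.of_apply]
  by_cases hjb : j = b
  · simp [hjb]
  by_cases hib : i = b
  · simp [hjb, hib, Fin.lt_add_one_and_add_one_le_iff hjb]
  · simp [hjb, hib, Fin.lt_add_one_and_add_one_le_iff hjb, (Ne.symm hib).le_iff_lt]

end

def Lset.equivStrictLowerEntries (n : ℕ) [NeZero n] :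
    Lset.submodule n ≃ₗ[ℂ] ({p : Fin n × Fin n // p.2 < p.1} → ℂ) where
  toFun A p := (A : Fin n → Matrix (Fin n) (Fin n) ℂ) p.1.1 p.1.1 p.1.2
  map_add' _ _ := rfl
  map_smul' _ _ := rfl
  invFun x := ⟨lowerWindow fun i j => if h : j < i then x ⟨(i, j), h⟩ else 0,
    lowerWindow_mem_Lset _⟩
  left_inv A := by
    ext b i j
    simp only [lowerWindow, Matrix.of_apply]
    by_cases hw : j < b ∧ b ≤ i
    · rw [if_pos hw, dif_pos (hw.1.trans_le hw.2)]
      exact Cset0.apply_eq_of_le A.2.1 hw.2 fun d hbd hdi => ⟨hdi.ne, by order [hw.1]⟩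
    · rw [if_neg hw]
      exact (Lset.apply_eq_zero A.2 hw).symm
  right_inv x := by
    funext ⟨⟨i, j⟩, h⟩
    simp [lowerWindow, h]

theorem Lset.finrank_submodule (n : ℕ) [NeZero n] :
    Module.finrank ℂ (Lset.submodule n) = n * (n - 1) / 2 := by
  rw [(Lset.equivStrictLowerEntries n).finrank_eq, Module.finrank_fintype_fun_eq_card,
    Fintype.card_subtype_snd_lt_fst, Fintype.card_fin, Nat.choose_two_right]

theorem Lset_eq_setOf_apply_zero_eq_zero (n : ℕ) [NeZero n] :
    Lset n = {A | A ∈ Cset0 n ∧ A 0 = 0} := by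
  ext A
  constructor
  · refine fun hA => ⟨hA.1, ?_⟩
    ext i j
    exact Lset.apply_eq_zero hA fun h => not_lt_of_ge (Fin.zero_le j) h.1
  rintro ⟨hA, h0⟩
  refine ⟨hA, fun b i j hij => ?_⟩
  have h0ij : A 0 i j = 0 := by rw [h0]; rfl
  rcases le_or_gt b i with hbi | hib
  · rw [Cset0.apply_eq_of_le hA (Fin.zero_le b) fun d _ hdb => ⟨by order, by order⟩, h0ij]
  rcases le_or_gt b j with hbj | hjb
  · exact Cset0.apply_eq_zero_of_le hA hbj fun h => by order [h.1]
  · rw [← Cset0.apply_zero_eq hA fun d hbd => ⟨by order, by order⟩, h0ij]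

theorem statement10_general (n : ℕ) [NeZero n] :
    (∀ A ∈ Lset n, ∀ B ∈ Lset n,
        (fun b => A b * B b - B b * A b) = (0 : Fin n → Matrix (Fin n) (Fin n) ℂ)) ∧
    (∀ A ∈ Cset0 n, ∀ B ∈ Lset n, (fun b => A b * B b - B b * A b) ∈ Lset n) ∧
    (∃ S : Submodule ℂ (Fin n → Matrix (Fin n) (Fin n) ℂ),
      (S : Set (Fin n → Matrix (Fin n) (Fin n) ℂ)) = Lset n ∧
      Module.finrank ℂ S = n * (n - 1) / 2) ∧
    Lset n = {A | A ∈ Cset0 n ∧ A 0 = 0} := by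
  refine ⟨fun A hA B hB => ?_, fun A hA B hB => Lset.mul_sub_mul_mem hA hB,
    ⟨Lset.submodule n, rfl, Lset.finrank_submodule n⟩,
    Lset_eq_setOf_apply_zero_eq_zero n⟩
  change A * B - B * A = 0
  rw [Lset.mul_eq_zero hA hB, Lset.mul_eq_zero hB hA, sub_zero]

/-- `L` is an abelian Lie ideal of `C(0)` of dimension `n(n-1)/2`:
`[L,L] = 0` and `[C(0),L] ⊆ L`; `L` is a ℂ-subspace of dimension `n(n-1)/2`; and `L` is
the kernel of the restriction to `C(0)` of the projection onto the component `b = 0`. -/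
theorem statement10 (n : ℕ) [NeZero n] (hn : 2 ≤ n) :
    (∀ A ∈ Lset n, ∀ B ∈ Lset n,
        (fun b => A b * B b - B b * A b) = (0 : Fin n → Matrix (Fin n) (Fin n) ℂ)) ∧
    (∀ A ∈ Cset0 n, ∀ B ∈ Lset n, (fun b => A b * B b - B b * A b) ∈ Lset n) ∧
    (∃ S : Submodule ℂ (Fin n → Matrix (Fin n) (Fin n) ℂ),
      (S : Set (Fin n → Matrix (Fin n) (Fin n) ℂ)) = Lset n ∧
      Module.finrank ℂ S = n * (n - 1) / 2) ∧
    Lset n = {A | A ∈ Cset0 n ∧ A 0 = 0} :=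
  statement10_general n
end

section
/- Let R be the n×n cyclic permutation matrix determined by R·e_i = e_{i+1} on the standard basis e_1,…,e_n of ℂ^n (indices modulo n, so R·e_n = e_1). For every ε ∈ ℂ, the map (A_b)_{b∈ℤ/nℤ} ↦ (R·A_{b−1}·R^{-1})_{b∈ℤ/nℤ} maps C(ε) into itself, is a Lie algebra automorphism of C(ε), and its n-th power is the identity; hence the cyclic group ℤ/nℤ acts on C(ε) by Lie algebra automorphisms. -/
/-- The cyclic permutation matrix `R` with `R·e_i = e_{i+1}` (indices modulo `n`):
its `(i,j)` entry is `1` iff `i = j + 1` in `Fin n` (wraparound). -/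
def Rmat (n : ℕ) [NeZero n] : Matrix (Fin n) (Fin n) ℂ :=
  fun i j => if i = j + 1 then 1 else 0

/-- The inverse cyclic permutation matrix, `R⁻¹ = Rᵀ`. -/
def RmatInv (n : ℕ) [NeZero n] : Matrix (Fin n) (Fin n) ℂ :=
  fun i j => if j = i + 1 then 1 else 0

/-- The rotation map `(A_b)_b ↦ (R·A_{b-1}·R⁻¹)_b`. -/
noncomputable def rot (n : ℕ) [NeZero n] (A : Fin n → Matrix (Fin n) (Fin n) ℂ) :
    Fin n → Matrix (Fin n) (Fin n) ℂ :=
  fun b => Rmat n * A (b - 1) * RmatInv n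

/-!
Conjugation by the cyclic permutation matrix `R` relabels rows and columns by `i ↦ i - 1`, so it
is an algebra automorphism of `gl_n` sending `D_{b-1}(ε)` to `D_b(ε)`. Composed with the shift
`b ↦ b - 1` of the index it therefore preserves the relations defining `C(ε)`, and its `n`-th
iterate relabels everything by `-n = 0`.
-/

open Matrix

section
variable (n : ℕ) [NeZero n]

lemma Rmat_eq_permMatrix : Rmat n = Equiv.Perm.permMatrix ℂ (Equiv.subRight (1 : Fin n)) := by
  ext i j
  simp [Rmat, PEquiv.toMatrix_apply, sub_eq_iff_eq_add]

lemma RmatInv_eq_permMatrix : RmatInv n = Equiv.Perm.permMatrix ℂ (Equiv.addRight (1 : Fin n)) := by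
  ext i j
  simp [RmatInv, PEquiv.toMatrix_apply, eq_comm]

noncomputable def cyclicShift : Matrix (Fin n) (Fin n) ℂ ≃ₐ[ℂ] Matrix (Fin n) (Fin n) ℂ :=
  reindexAlgEquiv ℂ ℂ (Equiv.addRight 1)

lemma cyclicShift_apply (X : Matrix (Fin n) (Fin n) ℂ) (i j : Fin n) :
    cyclicShift n X i j = X (i - 1) (j - 1) := by
  simp only [cyclicShift, coe_reindexAlgEquiv, reindex_apply, Equiv.addRight_symm,
    Equiv.coe_addRight, submatrix_apply, sub_eq_add_neg]

lemma Rmat_mul_mul_RmatInv (X : Matrix (Fin n) (Fin n) ℂ) :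
    Rmat n * X * RmatInv n = cyclicShift n X := by
  ext i j
  rw [Rmat_eq_permMatrix, RmatInv_eq_permMatrix, PEquiv.toMatrix_toPEquiv_mul,
    PEquiv.mul_toMatrix_toPEquiv, cyclicShift_apply]
  simp [sub_eq_add_neg]

lemma Rmat_mul_RmatInv : Rmat n * RmatInv n = 1 := by
  simpa only [mul_one, map_one] using Rmat_mul_mul_RmatInv n 1

lemma RmatInv_mul_Rmat : RmatInv n * Rmat n = 1 :=
  mul_eq_one_comm.mp (Rmat_mul_RmatInv n)

lemma rot_apply (A : Fin n → Matrix (Fin n) (Fin n) ℂ) (b : Fin n) :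
    rot n A b = cyclicShift n (A (b - 1)) :=
  Rmat_mul_mul_RmatInv n _

open Fin.NatCast in
lemma iterate_rot_apply (k : ℕ) (A : Fin n → Matrix (Fin n) (Fin n) ℂ) (b i j : Fin n) :
    (rot n)^[k] A b i j = A (b - k) (i - k) (j - k) := by
  induction k generalizing b i j with
  | zero => simp
  | succ k ih =>
    simp only [Function.iterate_succ_apply', rot_apply, cyclicShift_apply, ih, Nat.cast_succ,
      sub_sub, add_comm (1 : Fin n)]

lemma cyclicShift_Dmat (ε : ℂ) (b : Fin n) : cyclicShift n (Dmat n ε b) = Dmat n ε (b + 1) := by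
  ext i j
  simp [Dmat, cyclicShift_apply, diagonal_apply, sub_eq_iff_eq_add]

lemma rot_mem_Cset {ε : ℂ} {A : Fin n → Matrix (Fin n) (Fin n) ℂ} (hA : A ∈ Cset n ε) :
    rot n A ∈ Cset n ε := by
  intro b
  have hD : Dmat n ε b = cyclicShift n (Dmat n ε (b - 1)) := by
    rw [cyclicShift_Dmat, sub_add_cancel]
  have hAb : A b * Dmat n ε (b - 1) = Dmat n ε (b - 1) * A (b - 1) := by
    simpa only [sub_add_cancel] using hA (b - 1)
  rw [rot_apply, rot_apply, add_sub_cancel_right, hD, ← map_mul, ← map_mul, hAb]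

end

theorem statement12_general (n : ℕ) [NeZero n] (ε : ℂ) :
    Rmat n * RmatInv n = 1 ∧ RmatInv n * Rmat n = 1 ∧
    (∀ A ∈ Cset n ε, rot n A ∈ Cset n ε) ∧
    (∀ A B : Fin n → Matrix (Fin n) (Fin n) ℂ, rot n (A + B) = rot n A + rot n B) ∧
    (∀ (c : ℂ) (A : Fin n → Matrix (Fin n) (Fin n) ℂ), rot n (c • A) = c • rot n A) ∧
    (∀ A B : Fin n → Matrix (Fin n) (Fin n) ℂ,
      rot n (fun b => A b * B b - B b * A b)
        = fun b => rot n A b * rot n B b - rot n B b * rot n A b) ∧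
    (∀ A : Fin n → Matrix (Fin n) (Fin n) ℂ, (rot n)^[n] A = A) := by
  refine ⟨Rmat_mul_RmatInv n, RmatInv_mul_Rmat n, fun A hA => rot_mem_Cset n hA,
    fun A B => ?_, fun c A => ?_, fun A B => ?_, fun A => ?_⟩
  · ext1 b
    simp only [rot_apply, Pi.add_apply, map_add]
  · ext1 b
    simp only [rot_apply, Pi.smul_apply, map_smul]
  · ext1 b
    simp only [rot_apply, map_sub, map_mul]
  · ext b i j
    simp [iterate_rot_apply]

/-- `RmatInv n` is the inverse of the cyclic permutation matrix `R`, the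
rotation map `(A_b)_b ↦ (R·A_{b-1}·R⁻¹)_b` maps `C(ε)` into itself, is ℂ-linear and
preserves the componentwise commutator bracket (hence is a Lie algebra automorphism of
`C(ε)`), and its `n`-th power is the identity; hence `ℤ/nℤ` acts on `C(ε)` by Lie
algebra automorphisms. -/
theorem statement12 (n : ℕ) [NeZero n] (hn : 2 ≤ n) (ε : ℂ) :
    Rmat n * RmatInv n = 1 ∧ RmatInv n * Rmat n = 1 ∧
    (∀ A ∈ Cset n ε, rot n A ∈ Cset n ε) ∧
    (∀ A B : Fin n → Matrix (Fin n) (Fin n) ℂ, rot n (A + B) = rot n A + rot n B) ∧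
    (∀ (c : ℂ) (A : Fin n → Matrix (Fin n) (Fin n) ℂ), rot n (c • A) = c • rot n A) ∧
    (∀ A B : Fin n → Matrix (Fin n) (Fin n) ℂ,
      rot n (fun b => A b * B b - B b * A b)
        = fun b => rot n A b * rot n B b - rot n B b * rot n A b) ∧
    (∀ A : Fin n → Matrix (Fin n) (Fin n) ℂ, (rot n)^[n] A = A) :=
  statement12_general n ε
end

section
/- Let W1 be the smallest subspace of V ⊗ U containing e_0⊗f_0 and invariant under the operators N⊗id and id⊗M', and let W2 be the smallest subspace of V ⊗ U containing e_{λ0}⊗f_{λ1} and invariant under the same two operators. Then W1 = span{ e_m⊗f_0 : 0 ≤ m ≤ λ0 }, W2 = span{ e_{λ0}⊗f_m : 0 ≤ m ≤ λ1 }, the intersection W1 ∩ W2 is the line ℂ·(e_{λ0}⊗f_0), and dim(W1 + W2) = λ0 + λ1 + 1, which equals the dimension of the irreducible sl_2-module of highest weight λ0+λ1. -/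
/-- The model of `V ⊗ U` in coordinates, where `V = ℂ^{λ0+1}` with basis `e_0,…,e_{λ0}`
and `U = ℂ^{λ1+1}` with basis `f_0,…,f_{λ1}`: a vector is the function assigning to each
basis index `(i,j)` (for `e_i ⊗ f_j`) its coefficient. -/
abbrev Tensor (l0 l1 : ℕ) : Type := Fin (l0 + 1) × Fin (l1 + 1) → ℂ

/-- The operator `N⊗id`, where `N` is the lowering shift `e_i ↦ e_{i+1}` (`e_{λ0} ↦ 0`):
the coefficient of `e_i ⊗ f_j` in `(N⊗id) v` is the coefficient of `e_{i-1} ⊗ f_j` in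
`v` (zero for `i = 0`). -/
def T1 (l0 l1 : ℕ) (v : Tensor l0 l1) : Tensor l0 l1 :=
  fun p => if h : 0 < p.1.val then v (⟨p.1.val - 1, by have := p.1.isLt; omega⟩, p.2) else 0

/-- The operator `id⊗M'`, where `M'` is the raising shift `f_i ↦ f_{i-1}` (`f_0 ↦ 0`):
the coefficient of `e_i ⊗ f_j` in `(id⊗M') v` is the coefficient of `e_i ⊗ f_{j+1}` in
`v` (zero for `j = λ1`). -/
def T2 (l0 l1 : ℕ) (v : Tensor l0 l1) : Tensor l0 l1 :=
  fun p => if h : p.2.val < l1 then v (p.1, ⟨p.2.val + 1, by omega⟩) else 0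

/-- `e_0 ⊗ f_0`. -/
def v00 (l0 l1 : ℕ) : Tensor l0 l1 := Pi.single (0, 0) 1

/-- `e_{λ0} ⊗ f_{λ1}`. -/
def vLast (l0 l1 : ℕ) : Tensor l0 l1 := Pi.single (Fin.last l0, Fin.last l1) 1

/-- `span{ e_m ⊗ f_0 : 0 ≤ m ≤ λ0 }`. -/
noncomputable def S1 (l0 l1 : ℕ) : Submodule ℂ (Tensor l0 l1) :=
  Submodule.span ℂ (Set.range fun m : Fin (l0 + 1) =>
    (Pi.single (m, (0 : Fin (l1 + 1))) 1 : Tensor l0 l1))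

/-- `span{ e_{λ0} ⊗ f_m : 0 ≤ m ≤ λ1 }`. -/
noncomputable def S2 (l0 l1 : ℕ) : Submodule ℂ (Tensor l0 l1) :=
  Submodule.span ℂ (Set.range fun m : Fin (l1 + 1) =>
    (Pi.single (Fin.last l0, m) 1 : Tensor l0 l1))

/-- "`W` contains `v` and is invariant under `N⊗id` and `id⊗M'`". -/
def IsInvSub (l0 l1 : ℕ) (v : Tensor l0 l1) (W : Submodule ℂ (Tensor l0 l1)) : Prop :=
  v ∈ W ∧ (∀ x ∈ W, T1 l0 l1 x ∈ W) ∧ (∀ x ∈ W, T2 l0 l1 x ∈ W)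

/-!
In coordinates `S1` is the space of vectors supported on the row `{(i, 0)}` and `S2` the space of
vectors supported on the column `{(λ0, j)}`. Both shifts map such a vector to one with the same
kind of support, and starting from the generator, `N⊗id` walks along the row while `id⊗M'` walks
down the column, reaching every basis vector of it. The row and the column meet in the single
index `(λ0, 0)`, so `dim (S1 + S2) = (λ0 + 1) + (λ1 + 1) - 1`.
-/

open Submodule

theorem Pi.mem_span_range_single_iff {ι κ R : Type*} [Fintype ι] [DecidableEq ι] [Semiring R]
    (g : κ → ι) (v : ι → R) :
    v ∈ span R (Set.range fun k => (Pi.single (g k) 1 : ι → R)) ↔ ∀ i ∉ Set.range g, v i = 0 := by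
  have hb : ⇑(Pi.basisFun R ι) ∘ g = fun k => Pi.single (g k) 1 := by ext; simp
  rw [← hb, Set.range_comp, Module.Basis.mem_span_image]
  simp only [Set.subset_def, Finset.mem_coe, Finsupp.mem_support_iff, Pi.basisFun_repr]
  exact forall_congr' fun i => not_imp_comm

theorem Pi.finrank_span_range_single {ι κ R : Type*} [Fintype ι] [DecidableEq ι] [Fintype κ]
    [Ring R] [Nontrivial R] [StrongRankCondition R] {g : κ → ι} (hg : g.Injective) :
    Module.finrank R (span R (Set.range fun k => (Pi.single (g k) 1 : ι → R))) =
      Fintype.card κ := by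
  have hb : ⇑(Pi.basisFun R ι) ∘ g = fun k => Pi.single (g k) 1 := by ext; simp
  rw [← hb, finrank_span_eq_card ((Pi.basisFun R ι).linearIndependent.comp g hg)]

section

variable {l0 l1 : ℕ}

theorem T1_single (i : Fin l0) (j : Fin (l1 + 1)) :
    T1 l0 l1 (Pi.single (i.castSucc, j) 1) = Pi.single (i.succ, j) 1 := by
  funext ⟨a, b⟩
  simp only [T1, Pi.single_apply, Prod.ext_iff, Fin.ext_iff, Fin.val_castSucc, Fin.val_succ]
  split_ifs <;> first | rfl | omega

theorem T2_single (i : Fin (l0 + 1)) (j : Fin l1) :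
    T2 l0 l1 (Pi.single (i, j.succ) 1) = Pi.single (i, j.castSucc) 1 := by
  funext ⟨a, b⟩
  simp only [T2, Pi.single_apply, Prod.ext_iff, Fin.ext_iff, Fin.val_castSucc, Fin.val_succ]
  split_ifs <;> first | rfl | omega

theorem mem_S1_iff (v : Tensor l0 l1) : v ∈ S1 l0 l1 ↔ ∀ p, p.2 ≠ 0 → v p = 0 := by
  rw [S1, Pi.mem_span_range_single_iff (fun m => (m, 0))]
  refine forall_congr' fun ⟨a, b⟩ => imp_congr_left ?_
  simp [eq_comm]

theorem mem_S2_iff (v : Tensor l0 l1) : v ∈ S2 l0 l1 ↔ ∀ p, p.1 ≠ Fin.last l0 → v p = 0 := by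
  rw [S2, Pi.mem_span_range_single_iff (fun m => (Fin.last l0, m))]
  refine forall_congr' fun ⟨a, b⟩ => imp_congr_left ?_
  simp [eq_comm]

theorem single_mem_of_T1_mem {W : Submodule ℂ (Tensor l0 l1)} (hW : ∀ x ∈ W, T1 l0 l1 x ∈ W)
    {j : Fin (l1 + 1)} (h0 : Pi.single (0, j) 1 ∈ W) (i : Fin (l0 + 1)) :
    Pi.single (i, j) 1 ∈ W := by
  induction i using Fin.induction with
  | zero => exact h0
  | succ i ih => simpa only [T1_single] using hW _ ih

theorem single_mem_of_T2_mem {W : Submodule ℂ (Tensor l0 l1)} (hW : ∀ x ∈ W, T2 l0 l1 x ∈ W)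
    {i : Fin (l0 + 1)} (hlast : Pi.single (i, Fin.last l1) 1 ∈ W) (j : Fin (l1 + 1)) :
    Pi.single (i, j) 1 ∈ W := by
  induction j using Fin.reverseInduction with
  | last => exact hlast
  | cast j ih => simpa only [T2_single] using hW _ ih

theorem T1_mem_S1 {x : Tensor l0 l1} (hx : x ∈ S1 l0 l1) : T1 l0 l1 x ∈ S1 l0 l1 := by
  rw [mem_S1_iff] at hx ⊢
  intro p hp
  unfold T1
  split_ifs
  · exact hx _ hp
  · rfl

theorem T2_mem_S1 {x : Tensor l0 l1} (hx : x ∈ S1 l0 l1) : T2 l0 l1 x ∈ S1 l0 l1 := by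
  rw [mem_S1_iff] at hx ⊢
  intro p _
  unfold T2
  split_ifs
  · exact hx _ (Fin.ne_of_val_ne (by simp))
  · rfl

theorem T1_mem_S2 {x : Tensor l0 l1} (hx : x ∈ S2 l0 l1) : T1 l0 l1 x ∈ S2 l0 l1 := by
  rw [mem_S2_iff] at hx ⊢
  intro p _
  unfold T1
  split_ifs
  · exact hx _ (Fin.ne_of_val_ne (by simp; omega))
  · rfl

theorem T2_mem_S2 {x : Tensor l0 l1} (hx : x ∈ S2 l0 l1) : T2 l0 l1 x ∈ S2 l0 l1 := by
  rw [mem_S2_iff] at hx ⊢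
  intro p hp
  unfold T2
  split_ifs
  · exact hx _ hp
  · rfl

theorem isInvSub_S1 : IsInvSub l0 l1 (v00 l0 l1) (S1 l0 l1) :=
  ⟨subset_span ⟨0, rfl⟩, fun _ => T1_mem_S1, fun _ => T2_mem_S1⟩

theorem isInvSub_S2 : IsInvSub l0 l1 (vLast l0 l1) (S2 l0 l1) :=
  ⟨subset_span ⟨Fin.last l1, rfl⟩, fun _ => T1_mem_S2, fun _ => T2_mem_S2⟩

theorem S1_le_of_isInvSub {W : Submodule ℂ (Tensor l0 l1)} (hW : IsInvSub l0 l1 (v00 l0 l1) W) :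
    S1 l0 l1 ≤ W :=
  span_le.mpr <| Set.range_subset_iff.mpr <| single_mem_of_T1_mem hW.2.1 hW.1

theorem S2_le_of_isInvSub {W : Submodule ℂ (Tensor l0 l1)}
    (hW : IsInvSub l0 l1 (vLast l0 l1) W) : S2 l0 l1 ≤ W :=
  span_le.mpr <| Set.range_subset_iff.mpr <| single_mem_of_T2_mem hW.2.2 hW.1

theorem S1_inf_S2 :
    S1 l0 l1 ⊓ S2 l0 l1 = span ℂ {(Pi.single (Fin.last l0, 0) 1 : Tensor l0 l1)} := by
  ext v
  rw [mem_inf, mem_S1_iff, mem_S2_iff, ← forall_and, ← Set.range_const (ι := Unit),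
    Pi.mem_span_range_single_iff (fun _ => (Fin.last l0, 0))]
  refine forall_congr' fun p => ?_
  rw [← or_imp]
  refine imp_congr_left ?_
  simp only [ne_eq, Set.range_const, Set.mem_singleton_iff, Prod.ext_iff, not_and]
  tauto

theorem finrank_S1 : Module.finrank ℂ (S1 l0 l1) = l0 + 1 := by
  rw [S1, Pi.finrank_span_range_single (Prod.mk_left_injective 0), Fintype.card_fin]

theorem finrank_S2 : Module.finrank ℂ (S2 l0 l1) = l1 + 1 := by
  rw [S2, Pi.finrank_span_range_single (Prod.mk_right_injective _), Fintype.card_fin]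

theorem finrank_S1_sup_S2 : Module.finrank ℂ ↥(S1 l0 l1 ⊔ S2 l0 l1) = l0 + l1 + 1 := by
  have h := finrank_sup_add_finrank_inf_eq (S1 l0 l1) (S2 l0 l1)
  rw [finrank_S1, finrank_S2, S1_inf_S2, finrank_span_singleton (by simp)] at h
  omega

end

/-- `S1` is the smallest subspace of `V ⊗ U` containing `e_0⊗f_0` and
invariant under `N⊗id` and `id⊗M'`; `S2` is the smallest such subspace containing
`e_{λ0}⊗f_{λ1}`; their intersection is the line `ℂ·(e_{λ0}⊗f_0)`; and
`dim(S1 + S2) = λ0 + λ1 + 1`, the dimension of the irreducible `sl_2`-module of highest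
weight `λ0 + λ1`. -/
theorem statement14 (l0 l1 : ℕ) :
    (IsInvSub l0 l1 (v00 l0 l1) (S1 l0 l1) ∧
      ∀ W : Submodule ℂ (Tensor l0 l1), IsInvSub l0 l1 (v00 l0 l1) W → S1 l0 l1 ≤ W) ∧
    (IsInvSub l0 l1 (vLast l0 l1) (S2 l0 l1) ∧
      ∀ W : Submodule ℂ (Tensor l0 l1), IsInvSub l0 l1 (vLast l0 l1) W → S2 l0 l1 ≤ W) ∧
    S1 l0 l1 ⊓ S2 l0 l1
      = Submodule.span ℂ {(Pi.single (Fin.last l0, (0 : Fin (l1 + 1))) 1 : Tensor l0 l1)} ∧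
    Module.finrank ℂ ↥(S1 l0 l1 ⊔ S2 l0 l1) = l0 + l1 + 1 :=
  ⟨⟨isInvSub_S1, fun _ => S1_le_of_isInvSub⟩, ⟨isInvSub_S2, fun _ => S2_le_of_isInvSub⟩,
    S1_inf_S2, finrank_S1_sup_S2⟩
end
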